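/- Let L be a subgroup of ℤ^n with L ∩ ℕ^n = {0}. Then for every b ∈ ℤ^n, the set {a ∈ L + ℕ^n : a ≤ b componentwise} is finite. (This says that the lattice module M_L, whose exponent set is L + ℕ^n, is co-artinian: it has only finitely many monomials of degree ≼ b for each b ∈ ℤ^n.) -/

import Mathlib

lemma lattice_below_finite (n : ℕ) (L : AddSubgroup (Fin n → ℤ))
    (hL : (L : Set (Fin n → ℤ)) ∩ {v | ∀ i, 0 ≤ v i} = {0}) (b : Fin n → ℤ) :
    {l : Fin n → ℤ | l ∈ L ∧ l ≤ b}.Finite := by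
  by_contra h
  have hinf : {l : Fin n → ℤ | l ∈ L ∧ l ≤ b}.Infinite := h
  let e := hinf.natEmbedding
  let g : ℕ → (Fin n → ℕ) := fun k i => (b i - (e k).1 i).toNat
  have hpwo : (Set.univ : Set (Fin n → ℕ)).IsPWO := Set.isPWO_of_wellQuasiOrderedLE Set.univ
  obtain ⟨m, k, hmk, hle⟩ := hpwo.exists_lt (f := g) (fun _ => trivial)
  -- from g m ≤ g k deduce (e k).1 ≤ (e m).1
  have hkm : (e k).1 ≤ (e m).1 := by
    intro i
    have h1 : (0:ℤ) ≤ b i - (e m).1 i := by linarith [(e m).2.2 i]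
    have h2 : (0:ℤ) ≤ b i - (e k).1 i := by linarith [(e k).2.2 i]
    have := hle i
    simp only [g] at this
    have : (b i - (e m).1 i) ≤ (b i - (e k).1 i) := by
      rw [← Int.toNat_of_nonneg h1, ← Int.toNat_of_nonneg h2]
      exact_mod_cast this
    linarith
  set d := (e m).1 - (e k).1 with hd
  have hdL : d ∈ (L : Set (Fin n → ℤ)) := sub_mem (e m).2.1 (e k).2.1
  have hdpos : d ∈ {v : Fin n → ℤ | ∀ i, 0 ≤ v i} := by
    intro i; simp [hd, sub_nonneg]; exact hkm i
  have hd0 : d = 0 := by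
    have : d ∈ (L : Set (Fin n → ℤ)) ∩ {v | ∀ i, 0 ≤ v i} := ⟨hdL, hdpos⟩
    rw [hL] at this
    exact this
  have : (e m).1 = (e k).1 := by
    have := sub_eq_zero.mp hd0
    exact this
  have : e m = e k := Subtype.ext this
  exact absurd (e.injective this) (Nat.ne_of_lt hmk)

/-- If `L ≤ ℤ^n` with `L ∩ ℕ^n = {0}`, then for every `b ∈ ℤ^n` the set of
exponents `a ∈ L + ℕ^n` of the lattice module `M_L` with `a ≤ b` componentwise is finite,
i.e. the lattice module is co-artinian. -/
theorem lattice_module_coartinian (n : ℕ) (L : AddSubgroup (Fin n → ℤ))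
    (hL : (L : Set (Fin n → ℤ)) ∩ {v | ∀ i, 0 ≤ v i} = {0}) :
    ∀ b : Fin n → ℤ,
      {a : Fin n → ℤ |
        (∃ l ∈ L, ∃ u : Fin n → ℤ, (∀ i, 0 ≤ u i) ∧ a = l + u) ∧ a ≤ b}.Finite := by
  intro b
  have hS := lattice_below_finite n L hL b
  apply Set.Finite.subset (hS.biUnion (fun l _ => Set.finite_Icc l b))
  rintro a ⟨⟨l, hlL, u, hu, rfl⟩, hab⟩
  have hla : l ≤ l + u := by intro i; simpa using hu i
  exact Set.mem_biUnion ⟨hlL, le_trans hla hab⟩ ⟨hla, hab⟩
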